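/- Let n ≥ 11 be an integer, p ≥ p_JL, and let σ = σ(n,p), L and v_∞ be as defined. Let b > 0 and ℓ ∈ (σ, n−σ). Let u₀ : ℝⁿ → ℝ be measurable with 0 ≤ u₀(x) ≤ v_∞(x) for all x ≠ 0 and v_∞(x) − b|x|^{−ℓ} ≤ u₀(x) for all |x| ≥ 1. Suppose u : (ℝⁿ∖{0})×(0,∞) → ℝ satisfies the comparison bound: there are constants C₀ > 0 and c > 1 such that for all t > 0 and x ≠ 0, 0 ≤ v_∞(x) − u(x,t) ≤ C₀·φ_σ(x,t)·∫_{ℝⁿ} φ_σ(y,t)·G(x−y, ct)·(v_∞(y) − u₀(y)) dy. Then there exists C > 0 such that for all t ≥ 1: sup_{0<|x|≤√t} |x|^σ·(v_∞(x) − u(x,t)) ≤ C·t^{−(ℓ−σ)/2} and sup_{|x|≥√t} (v_∞(x) − u(x,t)) ≤ C·t^{−ℓ/2}. -/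

import Mathlib

/-!
The comparison bound reduces both estimates to one weighted Gaussian integral
`I(x,t) = ∫ φ_σ(y,t) G(x-y,ct) (v_∞ - u₀)(y) dy`, which is `O(t^(-ℓ/2))` uniformly in `x`.
Bound `v_∞ - u₀ ≤ L|y|^(-q) 1_{|y| ≤ 1} + b|y|^(-ℓ)` with `q = 2/(p-1)`. In the parabolic ball
`|y| ≤ √t` we have `φ_σ = t^(σ/2)|y|^(-σ)` and `G ≤ (4πct)^(-n/2)`, so by polar coordinates
the contributions are `t^((σ-n)/2) ∫_{B_1} |y|^(-σ-q)` and `t^((σ-n)/2) ∫_{B_√t} |y|^(-σ-ℓ)`,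
both `O(t^(-ℓ/2))` because `σ + q, σ + ℓ < n`; outside it `φ_σ = 1`, `|y|^(-ℓ) ≤ t^(-ℓ/2)` and
`G` has mass one. Finally `|x|^σ φ_σ(x,t) = t^(σ/2)` for `|x| ≤ √t` and `φ_σ = 1` beyond.
Since `p_JL > (n+2)/(n-2)`, we have `q < (n-2)/2` and `0 < σ ≤ (n-2)/2`.
-/

open Real MeasureTheory

/-- The Gauss–Weierstrass heat kernel on `ℝⁿ`. -/
noncomputable def heatKernel (n : ℕ) (x : EuclideanSpace ℝ (Fin n)) (t : ℝ) : ℝ :=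
  (4 * Real.pi * t) ^ (-(n : ℝ) / 2) * Real.exp (-‖x‖ ^ 2 / (4 * t))

/-- The weight `φ_σ(x,t) = (√t/|x|)^σ` for `|x| ≤ √t`, and `1` for `|x| ≥ √t`. -/
noncomputable def phiWeight (n : ℕ) (σ : ℝ) (x : EuclideanSpace ℝ (Fin n)) (t : ℝ) : ℝ :=
  if ‖x‖ ≤ Real.sqrt t then (Real.sqrt t / ‖x‖) ^ σ else 1

open Set Metric

section PowerSingularity

variable {E : Type*} [NormedAddCommGroup E]

lemma closedBall_indicator_norm_rpow (a R : ℝ) :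
    (closedBall (0 : E) R).indicator (fun y => ‖y‖ ^ (-a)) =
      fun y => (Iic R).indicator (fun r : ℝ => r ^ (-a)) ‖y‖ := by
  ext y
  simp [indicator]

lemma radial_profile_eqOn (d : ℕ) (a R : ℝ) :
    EqOn (fun r : ℝ => r ^ (d - 1) • (Iic R).indicator (fun r : ℝ => r ^ (-a)) r)
      ((Iic R).indicator fun r => r ^ ((d - 1 : ℕ) - a)) (Ioi 0) := by
  intro r (hr : 0 < r)
  by_cases hrR : r ≤ R
  · simp [indicator, hrR, sub_eq_add_neg _ a, rpow_add hr]
  · simp [indicator, hrR]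

variable [NormedSpace ℝ E] [FiniteDimensional ℝ E] [Nontrivial E]

lemma cast_finrank_sub_one : ((Module.finrank ℝ E - 1 : ℕ) : ℝ) = Module.finrank ℝ E - 1 := by
  have : 1 ≤ Module.finrank ℝ E := Module.finrank_pos
  push_cast [this]
  rfl

variable [MeasurableSpace E] [BorelSpace E] (μ : Measure E) [μ.IsAddHaarMeasure]

-- Both statements reduce, in polar coordinates, to `∫₀^R r^(d-1-a) dr` with `d = dim E`.
theorem integrableOn_closedBall_norm_rpow_neg {a : ℝ} (ha : a < Module.finrank ℝ E) (R : ℝ) :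
    IntegrableOn (fun y : E => ‖y‖ ^ (-a)) (closedBall 0 R) μ := by
  rw [← integrable_indicator_iff measurableSet_closedBall, closedBall_indicator_norm_rpow,
    integrable_fun_norm_addHaar,
    integrableOn_congr_fun (radial_profile_eqOn _ a R) measurableSet_Ioi, IntegrableOn,
    integrable_indicator_iff measurableSet_Iic, IntegrableOn,
    Measure.restrict_restrict measurableSet_Iic, Iic_inter_Ioi]
  rcases le_or_gt 0 R with hR | hR
  · refine (intervalIntegrable_iff_integrableOn_Ioc_of_le hR).1
      (intervalIntegral.intervalIntegrable_rpow' ?_)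
    rw [cast_finrank_sub_one]
    linarith
  · simp [Ioc_eq_empty_of_le hR.le]

theorem setIntegral_closedBall_norm_rpow_neg {a : ℝ} (ha : a < Module.finrank ℝ E) {R : ℝ}
    (hR : 0 ≤ R) :
    ∫ y in closedBall (0 : E) R, ‖y‖ ^ (-a) ∂μ =
      Module.finrank ℝ E * μ.real (ball 0 1) * R ^ (Module.finrank ℝ E - a) /
        (Module.finrank ℝ E - a) := by
  have hexp : ((Module.finrank ℝ E - 1 : ℕ) : ℝ) - a + 1 = Module.finrank ℝ E - a := by
    rw [cast_finrank_sub_one]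
    ring
  rw [← integral_indicator measurableSet_closedBall, closedBall_indicator_norm_rpow,
    integral_fun_norm_addHaar,
    setIntegral_congr_fun measurableSet_Ioi (radial_profile_eqOn _ a R),
    integral_indicator measurableSet_Iic, Measure.restrict_restrict measurableSet_Iic,
    Iic_inter_Ioi, ← intervalIntegral.integral_of_le hR,
    integral_rpow (Or.inl (by linarith [hexp])), hexp, zero_rpow (by linarith),
    nsmul_eq_mul, smul_eq_mul]
  ring

end PowerSingularity

section HeatKernel

variable (n : ℕ) {s : ℝ}

lemma heatKernel_eq_mul_exp (z : EuclideanSpace ℝ (Fin n)) :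
    heatKernel n z s = (4 * π * s) ^ (-(n : ℝ) / 2) * exp (-(4 * s)⁻¹ * ‖z‖ ^ 2) := by
  rw [heatKernel, neg_div, neg_mul, ← div_eq_inv_mul, neg_div]

lemma heatKernel_nonneg (hs : 0 ≤ s) (z : EuclideanSpace ℝ (Fin n)) : 0 ≤ heatKernel n z s :=
  mul_nonneg (rpow_nonneg (by positivity) _) (exp_nonneg _)

lemma heatKernel_le (hs : 0 ≤ s) (z : EuclideanSpace ℝ (Fin n)) :
    heatKernel n z s ≤ (4 * π * s) ^ (-(n : ℝ) / 2) := by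
  refine mul_le_of_le_one_right (rpow_nonneg (by positivity) _) (exp_le_one_iff.2 ?_)
  rw [neg_div]
  exact neg_nonpos.2 (by positivity)

lemma continuous_heatKernel_sub (x : EuclideanSpace ℝ (Fin n)) :
    Continuous fun y => heatKernel n (x - y) s := by
  unfold heatKernel
  fun_prop

theorem integral_heatKernel_sub (hs : 0 < s) (x : EuclideanSpace ℝ (Fin n)) :
    ∫ y, heatKernel n (x - y) s = 1 := by
  simp_rw [heatKernel_eq_mul_exp]
  rw [integral_const_mul,
    integral_sub_left_eq_self (fun z : EuclideanSpace ℝ (Fin n) => exp (-(4 * s)⁻¹ * ‖z‖ ^ 2)),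
    GaussianFourier.integral_rexp_neg_mul_sq_norm (by positivity), finrank_euclideanSpace_fin,
    div_inv_eq_mul, show π * (4 * s) = 4 * π * s by ring, ← rpow_add (by positivity), neg_div,
    neg_add_cancel, rpow_zero]

theorem integrable_heatKernel_sub (hs : 0 < s) (x : EuclideanSpace ℝ (Fin n)) :
    Integrable fun y => heatKernel n (x - y) s :=
  .of_integral_ne_zero (by simp [integral_heatKernel_sub n hs x])

end HeatKernel

section Weight

variable {n : ℕ}

lemma phiWeight_nonneg (σ : ℝ) (x : EuclideanSpace ℝ (Fin n)) (t : ℝ) :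
    0 ≤ phiWeight n σ x t := by
  unfold phiWeight
  split_ifs
  · positivity
  · exact zero_le_one

lemma measurable_phiWeight (σ t : ℝ) : Measurable fun y : EuclideanSpace ℝ (Fin n) =>
    phiWeight n σ y t :=
  Measurable.ite (measurableSet_le measurable_norm measurable_const) (by fun_prop)
    measurable_const

lemma phiWeight_of_norm_le {σ t : ℝ} (ht : 0 ≤ t) {x : EuclideanSpace ℝ (Fin n)}
    (hx : ‖x‖ ≤ √t) : phiWeight n σ x t = t ^ (σ / 2) * ‖x‖ ^ (-σ) := by
  rw [phiWeight, if_pos hx, div_rpow (sqrt_nonneg t) (norm_nonneg x), rpow_neg (norm_nonneg x),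
    rpow_div_two_eq_sqrt σ ht, div_eq_mul_inv]

lemma phiWeight_of_sqrt_le {σ t : ℝ} (ht : 0 < t) {x : EuclideanSpace ℝ (Fin n)}
    (hx : √t ≤ ‖x‖) : phiWeight n σ x t = 1 := by
  rw [phiWeight]
  split_ifs with h
  · rw [le_antisymm h hx, div_self (sqrt_pos.2 ht).ne', one_rpow]
  · rfl

lemma norm_rpow_mul_phiWeight {σ t : ℝ} (ht : 0 ≤ t) {x : EuclideanSpace ℝ (Fin n)}
    (hx₀ : x ≠ 0) (hx : ‖x‖ ≤ √t) : ‖x‖ ^ σ * phiWeight n σ x t = t ^ (σ / 2) := by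
  rw [phiWeight_of_norm_le ht hx, mul_left_comm, ← rpow_add (norm_pos_iff.2 hx₀), add_neg_cancel,
    rpow_zero, mul_one]

end Weight

lemma integrable_and_integral_le_of_le {α : Type*} [MeasurableSpace α] {μ : Measure α}
    {f g : α → ℝ} (hf : AEStronglyMeasurable f μ) (hg : Integrable g μ) (hf₀ : 0 ≤ᵐ[μ] f)
    (hfg : f ≤ᵐ[μ] g) : Integrable f μ ∧ ∫ a, f a ∂μ ≤ ∫ a, g a ∂μ :=
  ⟨hg.mono' hf (by filter_upwards [hf₀, hfg] with a h₀ h; rwa [Real.norm_of_nonneg h₀]),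
    integral_mono_of_nonneg hf₀ hg hfg⟩

lemma le_indicator_rpow_add_rpow {E : Type*} [NormedAddCommGroup E] {w : E → ℝ} {q ℓ L b : ℝ}
    (hb : 0 ≤ b) (hw_near : ∀ y, y ≠ 0 → w y ≤ L * ‖y‖ ^ (-q))
    (hw_far : ∀ y, 1 ≤ ‖y‖ → w y ≤ b * ‖y‖ ^ (-ℓ)) {y : E} (hy : y ≠ 0) :
    w y ≤ L * (closedBall 0 1).indicator (fun y => ‖y‖ ^ (-q)) y + b * ‖y‖ ^ (-ℓ) := by
  by_cases hy₁ : ‖y‖ ≤ 1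
  · rw [indicator_of_mem (mem_closedBall_zero_iff.2 hy₁)]
    exact (hw_near y hy).trans (le_add_of_nonneg_right (by positivity))
  · rw [indicator_of_notMem (by simpa using hy₁), mul_zero, zero_add]
    exact hw_far y (not_le.1 hy₁).le

section WeightedHeatIntegral

variable {n : ℕ} {σ c : ℝ}

lemma phiWeight_mul_heatKernel_le (hc : 0 < c) {t : ℝ} (ht : 0 < t)
    {x y : EuclideanSpace ℝ (Fin n)} (hy : ‖y‖ ≤ √t) :
    phiWeight n σ y t * heatKernel n (x - y) (c * t) ≤
      (4 * π * c) ^ (-(n : ℝ) / 2) * t ^ ((σ - n) / 2) * ‖y‖ ^ (-σ) := by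
  have hpeak :
      heatKernel n (x - y) (c * t) ≤ (4 * π * c) ^ (-(n : ℝ) / 2) * t ^ (-(n : ℝ) / 2) := by
    rw [← mul_rpow (by positivity) ht.le, mul_assoc (4 * π)]
    exact heatKernel_le n (by positivity) _
  calc phiWeight n σ y t * heatKernel n (x - y) (c * t)
      ≤ t ^ (σ / 2) * ‖y‖ ^ (-σ) * ((4 * π * c) ^ (-(n : ℝ) / 2) * t ^ (-(n : ℝ) / 2)) := by
        rw [phiWeight_of_norm_le ht.le hy]
        gcongr
    _ = (4 * π * c) ^ (-(n : ℝ) / 2) * t ^ ((σ - n) / 2) * ‖y‖ ^ (-σ) := by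
        rw [sub_div, sub_eq_add_neg, rpow_add ht, neg_div]
        ring

lemma phiWeight_mul_heatKernel_mul_rpow_le (hc : 0 < c) {t ℓ : ℝ} (ht : 0 < t) (hℓ : 0 ≤ ℓ)
    {x y : EuclideanSpace ℝ (Fin n)} (hy₀ : y ≠ 0) :
    phiWeight n σ y t * heatKernel n (x - y) (c * t) * ‖y‖ ^ (-ℓ) ≤
      (4 * π * c) ^ (-(n : ℝ) / 2) * t ^ ((σ - n) / 2) *
          (closedBall 0 √t).indicator (fun y => ‖y‖ ^ (-(σ + ℓ))) y +
        t ^ (-ℓ / 2) * heatKernel n (x - y) (c * t) := by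
  have hG : 0 ≤ heatKernel n (x - y) (c * t) := heatKernel_nonneg n (by positivity) _
  by_cases hyt : ‖y‖ ≤ √t
  · rw [indicator_of_mem (mem_closedBall_zero_iff.2 hyt)]
    calc _ ≤ (4 * π * c) ^ (-(n : ℝ) / 2) * t ^ ((σ - n) / 2) * ‖y‖ ^ (-σ) * ‖y‖ ^ (-ℓ) :=
          mul_le_mul_of_nonneg_right (phiWeight_mul_heatKernel_le hc ht hyt) (by positivity)
      _ = (4 * π * c) ^ (-(n : ℝ) / 2) * t ^ ((σ - n) / 2) * ‖y‖ ^ (-(σ + ℓ)) := by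
        rw [neg_add, rpow_add (norm_pos_iff.2 hy₀)]
        ring
      _ ≤ _ := le_add_of_nonneg_right (by positivity)
  · have hdecay : ‖y‖ ^ (-ℓ) ≤ t ^ (-ℓ / 2) := by
      rw [rpow_div_two_eq_sqrt _ ht.le]
      exact rpow_le_rpow_of_nonpos (sqrt_pos.2 ht) (not_le.1 hyt).le (by linarith)
    rw [phiWeight_of_sqrt_le ht (not_le.1 hyt).le,
      indicator_of_notMem (by simpa using not_le.1 hyt), mul_zero, zero_add, one_mul, mul_comm]
    exact mul_le_mul_of_nonneg_right hdecay hG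

variable [NeZero n]

theorem integral_phiWeight_heatKernel_mul_indicator_rpow_le (hc : 0 < c) {q : ℝ}
    (hσq : σ + q < n) : ∃ K, ∀ t ≥ 1, ∀ x : EuclideanSpace ℝ (Fin n),
      Integrable (fun y => phiWeight n σ y t * heatKernel n (x - y) (c * t) *
        (closedBall 0 1).indicator (fun y => ‖y‖ ^ (-q)) y) ∧
      ∫ y, phiWeight n σ y t * heatKernel n (x - y) (c * t) *
        (closedBall 0 1).indicator (fun y => ‖y‖ ^ (-q)) y ≤ K * t ^ ((σ - n) / 2) := by
  set G₀ := (4 * π * c) ^ (-(n : ℝ) / 2)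
  have hσq' : σ + q < Module.finrank ℝ (EuclideanSpace ℝ (Fin n)) := by simpa using hσq
  refine ⟨G₀ * ∫ y in closedBall (0 : EuclideanSpace ℝ (Fin n)) 1, ‖y‖ ^ (-(σ + q)),
    fun t ht x => ?_⟩
  have ht₀ : 0 < t := one_pos.trans_le ht
  have hmajor : Integrable fun y : EuclideanSpace ℝ (Fin n) => G₀ * t ^ ((σ - n) / 2) *
      (closedBall 0 1).indicator (fun y => ‖y‖ ^ (-(σ + q))) y :=
    ((integrableOn_closedBall_norm_rpow_neg volume hσq' 1).integrable_indicator
      measurableSet_closedBall).const_mul _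
  refine (integrable_and_integral_le_of_le ?_ hmajor ?_ ?_).imp_right fun h => h.trans_eq ?_
  · exact (((measurable_phiWeight σ t).mul (continuous_heatKernel_sub n x).measurable).mul
      ((by fun_prop : Measurable fun y : EuclideanSpace ℝ (Fin n) => ‖y‖ ^ (-q)).indicator
        measurableSet_closedBall)).aestronglyMeasurable
  · exact .of_forall fun y => mul_nonneg (mul_nonneg (phiWeight_nonneg σ y t)
      (heatKernel_nonneg n (by positivity) _)) (indicator_nonneg (fun y _ => by positivity) y)
  · filter_upwards [Measure.ae_ne volume 0] with y hy₀
    by_cases hy : y ∈ closedBall 0 1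
    · have hyt : ‖y‖ ≤ √t := (mem_closedBall_zero_iff.1 hy).trans (one_le_sqrt.2 ht)
      simp only [indicator_of_mem hy]
      calc _ ≤ G₀ * t ^ ((σ - n) / 2) * ‖y‖ ^ (-σ) * ‖y‖ ^ (-q) :=
            mul_le_mul_of_nonneg_right (phiWeight_mul_heatKernel_le hc ht₀ hyt) (by positivity)
        _ = _ := by
          rw [neg_add, rpow_add (norm_pos_iff.2 hy₀)]
          ring
    · simp [indicator_of_notMem hy]
  · rw [integral_const_mul, integral_indicator measurableSet_closedBall]
    ring

theorem integral_phiWeight_heatKernel_mul_rpow_le (hc : 0 < c) {ℓ : ℝ} (hℓ : 0 ≤ ℓ)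
    (hσℓ : σ + ℓ < n) : ∃ K, ∀ t > 0, ∀ x : EuclideanSpace ℝ (Fin n),
      Integrable (fun y => phiWeight n σ y t * heatKernel n (x - y) (c * t) * ‖y‖ ^ (-ℓ)) ∧
      ∫ y, phiWeight n σ y t * heatKernel n (x - y) (c * t) * ‖y‖ ^ (-ℓ) ≤ K * t ^ (-ℓ / 2) := by
  set G₀ := (4 * π * c) ^ (-(n : ℝ) / 2)
  have hσℓ' : σ + ℓ < Module.finrank ℝ (EuclideanSpace ℝ (Fin n)) := by simpa using hσℓ
  refine ⟨G₀ * (n * volume.real (ball (0 : EuclideanSpace ℝ (Fin n)) 1) / (n - (σ + ℓ))) + 1,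
    fun t ht x => ?_⟩
  have hball := ((integrableOn_closedBall_norm_rpow_neg volume hσℓ' √t).integrable_indicator
    measurableSet_closedBall).const_mul (G₀ * t ^ ((σ - n) / 2))
  have hheat := (integrable_heatKernel_sub n (mul_pos hc ht) x).const_mul (t ^ (-ℓ / 2))
  have hmajor : Integrable fun y => G₀ * t ^ ((σ - n) / 2) *
      (closedBall 0 √t).indicator (fun y => ‖y‖ ^ (-(σ + ℓ))) y +
        t ^ (-ℓ / 2) * heatKernel n (x - y) (c * t) := hball.add hheat
  refine (integrable_and_integral_le_of_le ?_ hmajor ?_ ?_).imp_right fun h => h.trans_eq ?_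
  · exact (((measurable_phiWeight σ t).mul (continuous_heatKernel_sub n x).measurable).mul
      (by fun_prop)).aestronglyMeasurable
  · exact .of_forall fun y => mul_nonneg (mul_nonneg (phiWeight_nonneg σ y t)
      (heatKernel_nonneg n (by positivity) _)) (by positivity)
  · filter_upwards [Measure.ae_ne volume 0] with y hy₀
    exact phiWeight_mul_heatKernel_mul_rpow_le hc ht hℓ hy₀
  · have hexp : t ^ ((σ - n) / 2) * t ^ ((n - (σ + ℓ)) / 2) = t ^ (-ℓ / 2) := by
      rw [← rpow_add ht]
      ring_nf
    rw [integral_add hball hheat, integral_const_mul, integral_const_mul, integral_indicator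
      measurableSet_closedBall, setIntegral_closedBall_norm_rpow_neg volume hσℓ' (sqrt_nonneg t),
      integral_heatKernel_sub n (by positivity), finrank_euclideanSpace_fin,
      ← rpow_div_two_eq_sqrt _ ht.le]
    linear_combination G₀ * (n * volume.real (ball (0 : EuclideanSpace ℝ (Fin n)) 1)) /
      (n - (σ + ℓ)) * hexp

theorem integral_phiWeight_heatKernel_mul_le (hc : 0 < c) {q ℓ L b : ℝ} (hℓ : 0 ≤ ℓ)
    (hσq : σ + q < n) (hσℓ : σ + ℓ < n) (hL : 0 ≤ L) (hb : 0 ≤ b)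
    {w : EuclideanSpace ℝ (Fin n) → ℝ} (hw₀ : ∀ y, y ≠ 0 → 0 ≤ w y)
    (hw_near : ∀ y, y ≠ 0 → w y ≤ L * ‖y‖ ^ (-q))
    (hw_far : ∀ y, 1 ≤ ‖y‖ → w y ≤ b * ‖y‖ ^ (-ℓ)) :
    ∃ K, ∀ t ≥ 1, ∀ x : EuclideanSpace ℝ (Fin n),
      ∫ y, phiWeight n σ y t * heatKernel n (x - y) (c * t) * w y ≤ K * t ^ (-ℓ / 2) := by
  obtain ⟨K₁, hK₁⟩ := integral_phiWeight_heatKernel_mul_indicator_rpow_le hc hσq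
  obtain ⟨K₂, hK₂⟩ := integral_phiWeight_heatKernel_mul_rpow_le hc hℓ hσℓ
  refine ⟨L * max K₁ 0 + b * K₂, fun t ht x => ?_⟩
  have ht₀ : 0 < t := one_pos.trans_le ht
  obtain ⟨hint₁, hle₁⟩ := hK₁ t ht x
  obtain ⟨hint₂, hle₂⟩ := hK₂ t ht₀ x
  have hdecay : t ^ ((σ - n) / 2) ≤ t ^ (-ℓ / 2) :=
    rpow_le_rpow_of_exponent_le ht (by linarith)
  have hφG : ∀ y, 0 ≤ phiWeight n σ y t * heatKernel n (x - y) (c * t) := fun y =>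
    mul_nonneg (phiWeight_nonneg σ y t) (heatKernel_nonneg n (by positivity) _)
  calc _ ≤ ∫ y, L * (phiWeight n σ y t * heatKernel n (x - y) (c * t) *
          (closedBall 0 1).indicator (fun y => ‖y‖ ^ (-q)) y) +
        b * (phiWeight n σ y t * heatKernel n (x - y) (c * t) * ‖y‖ ^ (-ℓ)) := by
        refine integral_mono_of_nonneg ?_ ((hint₁.const_mul L).add (hint₂.const_mul b)) ?_ <;>
          filter_upwards [Measure.ae_ne volume 0] with y hy
        · exact mul_nonneg (hφG y) (hw₀ y hy)
        · calc _ ≤ phiWeight n σ y t * heatKernel n (x - y) (c * t) *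
                (L * (closedBall 0 1).indicator (fun y => ‖y‖ ^ (-q)) y + b * ‖y‖ ^ (-ℓ)) :=
              mul_le_mul_of_nonneg_left (le_indicator_rpow_add_rpow hb hw_near hw_far hy) (hφG y)
            _ = _ := by ring
    _ = L * (∫ y, phiWeight n σ y t * heatKernel n (x - y) (c * t) *
          (closedBall 0 1).indicator (fun y => ‖y‖ ^ (-q)) y) +
        b * ∫ y, phiWeight n σ y t * heatKernel n (x - y) (c * t) * ‖y‖ ^ (-ℓ) := by
      rw [integral_add (hint₁.const_mul L) (hint₂.const_mul b), integral_const_mul,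
        integral_const_mul]
    _ ≤ L * (max K₁ 0 * t ^ (-ℓ / 2)) + b * (K₂ * t ^ (-ℓ / 2)) := by
      gcongr
      calc _ ≤ K₁ * t ^ ((σ - n) / 2) := hle₁
        _ ≤ max K₁ 0 * t ^ ((σ - n) / 2) := by gcongr; exact le_max_left _ _
        _ ≤ max K₁ 0 * t ^ (-ℓ / 2) := by gcongr
    _ = (L * max K₁ 0 + b * K₂) * t ^ (-ℓ / 2) := by ring

end WeightedHeatIntegral

section Exponents

noncomputable def josephLundgrenExponent (n : ℝ) : ℝ :=
  (n - 2 * √(n - 1)) / (n - 4 - 2 * √(n - 1))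

lemma sobolev_lt_of_josephLundgrenExponent_le {n p : ℝ} (hn : 11 ≤ n)
    (hp : josephLundgrenExponent n ≤ p) : (n + 2) / (n - 2) < p := by
  have hr : √(n - 1) ^ 2 = n - 1 := sq_sqrt (by linarith)
  have hr₀ : 0 ≤ √(n - 1) := sqrt_nonneg _
  have hD : 0 < n - 4 - 2 * √(n - 1) := by nlinarith
  refine lt_of_lt_of_le ?_ hp
  rw [josephLundgrenExponent, div_lt_div_iff₀ (by linarith) hD]
  nlinarith

lemma sub_sqrt_sub_pos {a μ : ℝ} (ha : 0 < a) (hμ : 0 < μ) : 0 < a / 2 - √(a ^ 2 / 4 - μ) := by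
  rw [sub_pos, sqrt_lt' (by positivity)]
  linarith

lemma exponents_of_josephLundgrenExponent_le {n p : ℝ} (hn : 11 ≤ n)
    (hp : josephLundgrenExponent n ≤ p) :
    1 < p ∧ 2 / (p - 1) < (n - 2) / 2 ∧
      0 < (n - 2) / 2 - √((n - 2) ^ 2 / 4 - 2 * p / (p - 1) * (n - 2 - 2 / (p - 1))) := by
  have hS := sobolev_lt_of_josephLundgrenExponent_le hn hp
  rw [div_lt_iff₀ (by linarith)] at hS
  have hp₁ : 1 < p := by nlinarith
  have hq : 2 / (p - 1) < (n - 2) / 2 := by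
    rw [div_lt_div_iff₀ (by linarith) two_pos]
    nlinarith
  exact ⟨hp₁, hq, sub_sqrt_sub_pos (by linarith) (mul_pos (by positivity) (by linarith))⟩

end Exponents

theorem weighted_decay_of_le_phiWeight_mul {n : ℕ} {σ ℓ C₀ K : ℝ} (hC₀ : 0 ≤ C₀)
    {f I : EuclideanSpace ℝ (Fin n) → ℝ → ℝ}
    (hf : ∀ t ≥ (1 : ℝ), ∀ x, x ≠ 0 → f x t ≤ C₀ * phiWeight n σ x t * I x t)
    (hI : ∀ t ≥ (1 : ℝ), ∀ x, I x t ≤ K * t ^ (-ℓ / 2)) :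
    ∃ C > 0, ∀ t ≥ (1 : ℝ),
      (∀ x, 0 < ‖x‖ → ‖x‖ ≤ √t → ‖x‖ ^ σ * f x t ≤ C * t ^ (-(ℓ - σ) / 2)) ∧
      (∀ x, √t ≤ ‖x‖ → f x t ≤ C * t ^ (-ℓ / 2)) := by
  refine ⟨max (C₀ * K) 1, lt_max_of_lt_right one_pos,
    fun t ht => ⟨fun x hx hxt => ?_, fun x hxt => ?_⟩⟩
  all_goals have ht₀ : 0 < t := one_pos.trans_le ht
  · have hx₀ : x ≠ 0 := norm_pos_iff.1 hx
    calc ‖x‖ ^ σ * f x t ≤ ‖x‖ ^ σ * phiWeight n σ x t * C₀ * I x t := by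
          have := mul_le_mul_of_nonneg_left (hf t ht x hx₀) (rpow_nonneg hx.le σ)
          linarith
      _ ≤ t ^ (σ / 2) * C₀ * (K * t ^ (-ℓ / 2)) := by
          rw [norm_rpow_mul_phiWeight ht₀.le hx₀ hxt]
          gcongr
          exact hI t ht x
      _ = C₀ * K * t ^ (-(ℓ - σ) / 2) := by
          rw [show -(ℓ - σ) / 2 = σ / 2 + -ℓ / 2 by ring, rpow_add ht₀]
          ring
      _ ≤ max (C₀ * K) 1 * t ^ (-(ℓ - σ) / 2) := by gcongr; exact le_max_left _ _
  · calc f x t ≤ C₀ * phiWeight n σ x t * I x t :=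
          hf t ht x (norm_pos_iff.1 ((sqrt_pos.2 ht₀).trans_le hxt))
      _ ≤ C₀ * 1 * (K * t ^ (-ℓ / 2)) := by
          rw [phiWeight_of_sqrt_le ht₀ hxt]
          gcongr
          exact hI t ht x
      _ ≤ max (C₀ * K) 1 * t ^ (-ℓ / 2) := by
          rw [mul_one, ← mul_assoc]
          gcongr
          exact le_max_left _ _

theorem convergence_to_singular_state_general (n : ℕ) (hn : 11 ≤ n) (p : ℝ)
    (hp : ((n : ℝ) - 2 * Real.sqrt ((n : ℝ) - 1)) /
      ((n : ℝ) - 4 - 2 * Real.sqrt ((n : ℝ) - 1)) ≤ p)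
    (σ L : ℝ)
    (hσ : σ = ((n : ℝ) - 2) / 2 -
      Real.sqrt (((n : ℝ) - 2) ^ 2 / 4 - (2 * p / (p - 1)) * ((n : ℝ) - 2 - 2 / (p - 1))))
    (hL : L = ((2 / (p - 1)) * ((n : ℝ) - 2 - 2 / (p - 1))) ^ (1 / (p - 1)))
    (vinf : EuclideanSpace ℝ (Fin n) → ℝ)
    (hvinf : ∀ x : EuclideanSpace ℝ (Fin n), vinf x = L * ‖x‖ ^ (-(2 / (p - 1))))
    (b ℓ : ℝ) (hb : 0 < b) (hℓ : ℓ ∈ Set.Ioo σ ((n : ℝ) - σ))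
    (u₀ : EuclideanSpace ℝ (Fin n) → ℝ)
    (hu₀ : ∀ x : EuclideanSpace ℝ (Fin n), x ≠ 0 → 0 ≤ u₀ x ∧ u₀ x ≤ vinf x)
    (hu₀low : ∀ x : EuclideanSpace ℝ (Fin n), 1 ≤ ‖x‖ → vinf x - b * ‖x‖ ^ (-ℓ) ≤ u₀ x)
    (u : EuclideanSpace ℝ (Fin n) → ℝ → ℝ) (C₀ c : ℝ) (hC₀ : 0 < C₀) (hc : 1 < c)
    (hcomp : ∀ t > (0 : ℝ), ∀ x : EuclideanSpace ℝ (Fin n), x ≠ 0 →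
      0 ≤ vinf x - u x t ∧
      vinf x - u x t ≤ C₀ * phiWeight n σ x t *
        ∫ y, phiWeight n σ y t * heatKernel n (x - y) (c * t) * (vinf y - u₀ y)) :
    ∃ C > 0, ∀ t ≥ (1 : ℝ),
      (∀ x : EuclideanSpace ℝ (Fin n), 0 < ‖x‖ → ‖x‖ ≤ Real.sqrt t →
        ‖x‖ ^ σ * (vinf x - u x t) ≤ C * t ^ (-(ℓ - σ) / 2)) ∧
      (∀ x : EuclideanSpace ℝ (Fin n), Real.sqrt t ≤ ‖x‖ →
        vinf x - u x t ≤ C * t ^ (-ℓ / 2)) := by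
  obtain ⟨hp₁, hq, hσ₀⟩ := exponents_of_josephLundgrenExponent_le (by exact_mod_cast hn) hp
  rw [← hσ] at hσ₀
  have hσ_le : σ ≤ (n - 2) / 2 := hσ ▸ sub_le_self _ (sqrt_nonneg _)
  have hL₀ : 0 ≤ L :=
    hL ▸ rpow_nonneg (mul_nonneg (div_pos two_pos (sub_pos.2 hp₁)).le (by linarith)) _
  have : NeZero n := ⟨by omega⟩
  obtain ⟨K, hK⟩ := integral_phiWeight_heatKernel_mul_le (σ := σ) (q := 2 / (p - 1))
    (w := fun y => vinf y - u₀ y)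
    (zero_lt_one.trans hc) (hσ₀.trans hℓ.1).le (by linarith) (by linarith [hℓ.2]) hL₀ hb.le
    (fun y hy => sub_nonneg.2 (hu₀ y hy).2) (fun y hy => by linarith [hvinf y, (hu₀ y hy).1])
    (fun y hy => by linarith [hu₀low y hy])
  exact weighted_decay_of_le_phiWeight_mul (f := fun x t => vinf x - u x t) hC₀.le
    (fun t ht x hx => (hcomp t (one_pos.trans_le ht) x hx).2) hK

/-- Theorem 2.1: weighted convergence of the solution towards the singular steady state
`v_∞(x) = L|x|^{−2/(p−1)}` for initial data trapped between `v_∞ − b|x|^{−ℓ}` and `v_∞`. -/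
theorem convergence_to_singular_state (n : ℕ) (hn : 11 ≤ n) (p : ℝ)
    (hp : ((n : ℝ) - 2 * Real.sqrt ((n : ℝ) - 1)) /
      ((n : ℝ) - 4 - 2 * Real.sqrt ((n : ℝ) - 1)) ≤ p)
    (σ L : ℝ)
    (hσ : σ = ((n : ℝ) - 2) / 2 -
      Real.sqrt (((n : ℝ) - 2) ^ 2 / 4 - (2 * p / (p - 1)) * ((n : ℝ) - 2 - 2 / (p - 1))))
    (hL : L = ((2 / (p - 1)) * ((n : ℝ) - 2 - 2 / (p - 1))) ^ (1 / (p - 1)))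
    (vinf : EuclideanSpace ℝ (Fin n) → ℝ)
    (hvinf : ∀ x : EuclideanSpace ℝ (Fin n), vinf x = L * ‖x‖ ^ (-(2 / (p - 1))))
    (b ℓ : ℝ) (hb : 0 < b) (hℓ : ℓ ∈ Set.Ioo σ ((n : ℝ) - σ))
    (u₀ : EuclideanSpace ℝ (Fin n) → ℝ) (hu₀meas : Measurable u₀)
    (hu₀ : ∀ x : EuclideanSpace ℝ (Fin n), x ≠ 0 → 0 ≤ u₀ x ∧ u₀ x ≤ vinf x)
    (hu₀low : ∀ x : EuclideanSpace ℝ (Fin n), 1 ≤ ‖x‖ → vinf x - b * ‖x‖ ^ (-ℓ) ≤ u₀ x)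
    (u : EuclideanSpace ℝ (Fin n) → ℝ → ℝ) (C₀ c : ℝ) (hC₀ : 0 < C₀) (hc : 1 < c)
    (hcomp : ∀ t > (0 : ℝ), ∀ x : EuclideanSpace ℝ (Fin n), x ≠ 0 →
      0 ≤ vinf x - u x t ∧
      vinf x - u x t ≤ C₀ * phiWeight n σ x t *
        ∫ y, phiWeight n σ y t * heatKernel n (x - y) (c * t) * (vinf y - u₀ y)) :
    ∃ C > 0, ∀ t ≥ (1 : ℝ),
      (∀ x : EuclideanSpace ℝ (Fin n), 0 < ‖x‖ → ‖x‖ ≤ Real.sqrt t →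
        ‖x‖ ^ σ * (vinf x - u x t) ≤ C * t ^ (-(ℓ - σ) / 2)) ∧
      (∀ x : EuclideanSpace ℝ (Fin n), Real.sqrt t ≤ ‖x‖ →
        vinf x - u x t ≤ C * t ^ (-ℓ / 2)) :=
  convergence_to_singular_state_general n hn p hp σ L hσ hL vinf hvinf b ℓ hb hℓ u₀ hu₀ hu₀low u C₀
    c hC₀ hc hcomp
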